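/- arXiv:1206.0135 — 2 statements merged into one kernel-verified Lean document; each statement's English description precedes it below -/
import Mathlib

section
/- Let p(z) and q(z) be Laurent polynomials in one variable z over a field K, where q(z) = Σ_{i=0}^{s} b_i z^{d+i} with b_0 ≠ 0 and b_s ≠ 0 (so the support of q has length s), and let d' be any integer. Then p(z) has a unique representation p(z) = q(z)·a(z) + r(z), where a(z) is a Laurent polynomial and r(z) = Σ_{i=0}^{s-1} c_i z^{d'+i} for some coefficients c_i ∈ K. -/
lemma ldwr_coeff_mul_min {K : Type*} [Semiring K] (f g : LaurentPolynomial K) {α β : ℤ}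
    (hf : ∀ n, f.coeff n ≠ 0 → α ≤ n) (hg : ∀ n, g.coeff n ≠ 0 → β ≤ n) :
    (f * g).coeff (α + β) = f.coeff α * g.coeff β := by
  classical
  rw [AddMonoidAlgebra.mul_apply]
  rw [Finsupp.sum]
  rw [Finset.sum_eq_single α]
  · rw [Finsupp.sum, Finset.sum_eq_single β]
    · simp
    · intro b hb hbne
      have := hg b (Finsupp.mem_support_iff.mp hb)
      exact if_neg (by omega)
    · intro hβ
      simp [Finsupp.notMem_support_iff.mp hβ]
  · intro a ha hane
    have hαa := hf a (Finsupp.mem_support_iff.mp ha)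
    apply Finset.sum_eq_zero
    intro b hb
    have := hg b (Finsupp.mem_support_iff.mp hb)
    exact if_neg (by omega)
  · intro hα
    simp [Finsupp.notMem_support_iff.mp hα]

lemma ldwr_coeff_mul_max {K : Type*} [Semiring K] (f g : LaurentPolynomial K) {α β : ℤ}
    (hf : ∀ n, f.coeff n ≠ 0 → n ≤ α) (hg : ∀ n, g.coeff n ≠ 0 → n ≤ β) :
    (f * g).coeff (α + β) = f.coeff α * g.coeff β := by
  classical
  rw [AddMonoidAlgebra.mul_apply]
  rw [Finsupp.sum]
  rw [Finset.sum_eq_single α]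
  · rw [Finsupp.sum, Finset.sum_eq_single β]
    · simp
    · intro b hb hbne
      have := hg b (Finsupp.mem_support_iff.mp hb)
      exact if_neg (by omega)
    · intro hβ
      simp [Finsupp.notMem_support_iff.mp hβ]
  · intro a ha hane
    have hαa := hf a (Finsupp.mem_support_iff.mp ha)
    apply Finset.sum_eq_zero
    intro b hb
    have := hg b (Finsupp.mem_support_iff.mp hb)
    exact if_neg (by omega)
  · intro hα
    simp [Finsupp.notMem_support_iff.mp hα]

lemma ldwr_exists {K : Type*} [Field K] (q : LaurentPolynomial K) (d : ℤ) (s : ℕ)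
    (hsupp : ∀ n : ℤ, q.coeff n ≠ 0 → d ≤ n ∧ n ≤ d + s)
    (hb0 : q.coeff d ≠ 0) (hbs : q.coeff (d + s) ≠ 0) (d' : ℤ) :
    ∀ N : ℕ, ∀ p : LaurentPolynomial K,
      (p.coeff.support.sup fun n => (n - (d' + s - 1)).toNat) +
        (p.coeff.support.sup fun n => (d' - n).toNat) ≤ N →
      ∃ a r : LaurentPolynomial K, p = q * a + r ∧
        ∀ n : ℤ, r.coeff n ≠ 0 → d' ≤ n ∧ n < d' + s := by
  intro N
  induction N with
  | zero =>
    intro p hμ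
    refine ⟨0, p, by simp, fun n hn => ?_⟩
    have hmem : n ∈ p.coeff.support := Finsupp.mem_support_iff.mpr hn
    have h1 : (n - (d' + s - 1)).toNat ≤ p.coeff.support.sup fun n => (n - (d' + s - 1)).toNat :=
      Finset.le_sup (f := fun n => (n - (d' + s - 1)).toNat) hmem
    have h2 : (d' - n).toNat ≤ p.coeff.support.sup fun n => (d' - n).toNat :=
      Finset.le_sup (f := fun n => (d' - n).toNat) hmem
    omega
  | succ N ih =>
    intro p hμ
    by_cases hwin : ∀ n : ℤ, p.coeff n ≠ 0 → d' ≤ n ∧ n < d' + s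
    · exact ⟨0, p, by simp, hwin⟩
    push_neg at hwin
    obtain ⟨n₀, hn₀, hout⟩ := hwin
    by_cases htop : ∃ n₁ : ℤ, p.coeff n₁ ≠ 0 ∧ d' + s ≤ n₁
    · -- cancel the top coefficient
      obtain ⟨n₁, hn₁, hn₁ge⟩ := htop
      have hne : p.coeff.support.Nonempty := ⟨n₁, Finsupp.mem_support_iff.mpr hn₁⟩
      set M := p.coeff.support.max' hne with hMdef
      have hMmem : M ∈ p.coeff.support := p.coeff.support.max'_mem hne
      have hM : p.coeff M ≠ 0 := Finsupp.mem_support_iff.mp hMmem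
      have hMle : ∀ n : ℤ, p.coeff n ≠ 0 → n ≤ M := fun n h =>
        Finset.le_max' _ _ (Finsupp.mem_support_iff.mpr h)
      have hMge : d' + s ≤ M := le_trans hn₁ge (hMle _ hn₁)
      set c := p.coeff M / q.coeff (d + s) with hcdef
      set t := M - (d + s) with htdef
      set p₁ := p - q * (AddMonoidAlgebra.single t c : LaurentPolynomial K) with hp₁
      have key : ∀ n : ℤ, (q * (AddMonoidAlgebra.single t c : LaurentPolynomial K)).coeff n = q.coeff (n - t) * c := fun n =>
        AddMonoidAlgebra.coeff_mul_single_apply q c t n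
      have hcoe : ∀ n : ℤ, p₁.coeff n = p.coeff n - q.coeff (n - t) * c := by
        intro n
        rw [hp₁, AddMonoidAlgebra.coeff_sub, Finsupp.sub_apply, key]
      have hp₁M : p₁.coeff M = 0 := by
        rw [hcoe]
        have : M - t = d + s := by omega
        rw [this, hcdef, mul_div_cancel₀ _ hbs, sub_self]
      have hsub : ∀ n : ℤ, p₁.coeff n ≠ 0 → n ≤ M - 1 ∧ (p.coeff n ≠ 0 ∨ d' ≤ n) := by
        intro n hn
        have hnM : n ≠ M := fun h => hn (h ▸ hp₁M)
        have h2 : p.coeff n ≠ 0 ∨ q.coeff (n - t) ≠ 0 := by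
          by_contra h
          push_neg at h
          rw [hcoe, h.1, h.2] at hn
          simp at hn
        rcases h2 with h | h
        · exact ⟨by have := hMle n h; omega, Or.inl h⟩
        · have := hsupp _ h
          by_cases hp : p.coeff n ≠ 0
          · exact ⟨by have := hMle n hp; omega, Or.inl hp⟩
          · exact ⟨by omega, Or.inr (by omega)⟩
      have hEp : (M - (d' + s - 1)).toNat ≤ p.coeff.support.sup fun n => (n - (d' + s - 1)).toNat :=
        Finset.le_sup (f := fun n => (n - (d' + s - 1)).toNat) hMmem
      have hE1 : (p₁.coeff.support.sup fun n => (n - (d' + s - 1)).toNat) ≤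
          (M - 1 - (d' + s - 1)).toNat := by
        apply Finset.sup_le
        intro n hn
        have := (hsub n (Finsupp.mem_support_iff.mp hn)).1
        omega
      have hB1 : (p₁.coeff.support.sup fun n => (d' - n).toNat) ≤
          p.coeff.support.sup fun n => (d' - n).toNat := by
        apply Finset.sup_le
        intro n hn
        rcases (hsub n (Finsupp.mem_support_iff.mp hn)).2 with h | h
        · exact Finset.le_sup (f := fun n => (d' - n).toNat) (Finsupp.mem_support_iff.mpr h)
        · omega
      obtain ⟨a, r, hpr, hwr⟩ := ih p₁ (by omega)
      rw [hp₁] at hpr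
      exact ⟨a + (AddMonoidAlgebra.single t c : LaurentPolynomial K), r, by linear_combination hpr, hwr⟩
    · -- cancel the bottom coefficient
      push_neg at htop
      have hbelow : n₀ < d' := by
        rcases lt_or_ge n₀ d' with h | h
        · exact h
        · exact absurd (hout h) (by have := htop n₀ hn₀; omega)
      have hne : p.coeff.support.Nonempty := ⟨n₀, Finsupp.mem_support_iff.mpr hn₀⟩
      set m := p.coeff.support.min' hne with hmdef
      have hmmem : m ∈ p.coeff.support := p.coeff.support.min'_mem hne
      have hm : p.coeff m ≠ 0 := Finsupp.mem_support_iff.mp hmmem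
      have hmle : ∀ n : ℤ, p.coeff n ≠ 0 → m ≤ n := fun n h =>
        Finset.min'_le _ _ (Finsupp.mem_support_iff.mpr h)
      have hmlt : m < d' := lt_of_le_of_lt (hmle _ hn₀) hbelow
      set c := p.coeff m / q.coeff d with hcdef
      set t := m - d with htdef
      set p₁ := p - q * (AddMonoidAlgebra.single t c : LaurentPolynomial K) with hp₁
      have key : ∀ n : ℤ, (q * (AddMonoidAlgebra.single t c : LaurentPolynomial K)).coeff n = q.coeff (n - t) * c := fun n =>
        AddMonoidAlgebra.coeff_mul_single_apply q c t n
      have hcoe : ∀ n : ℤ, p₁.coeff n = p.coeff n - q.coeff (n - t) * c := by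
        intro n
        rw [hp₁, AddMonoidAlgebra.coeff_sub, Finsupp.sub_apply, key]
      have hp₁m : p₁.coeff m = 0 := by
        rw [hcoe]
        have : m - t = d := by omega
        rw [this, hcdef, mul_div_cancel₀ _ hb0, sub_self]
      have hsub : ∀ n : ℤ, p₁.coeff n ≠ 0 → m + 1 ≤ n ∧ n < d' + s := by
        intro n hn
        have hnm : n ≠ m := fun h => hn (h ▸ hp₁m)
        have h2 : p.coeff n ≠ 0 ∨ q.coeff (n - t) ≠ 0 := by
          by_contra h
          push_neg at h
          rw [hcoe, h.1, h.2] at hn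
          simp at hn
        rcases h2 with h | h
        · exact ⟨by have := hmle n h; omega, htop n h⟩
        · have := hsupp _ h
          by_cases hp : p.coeff n ≠ 0
          · exact ⟨by have := hmle n hp; omega, htop n hp⟩
          · exact ⟨by omega, by omega⟩
      have hBp : (d' - m).toNat ≤ p.coeff.support.sup fun n => (d' - n).toNat :=
        Finset.le_sup (f := fun n => (d' - n).toNat) hmmem
      have hE1 : (p₁.coeff.support.sup fun n => (n - (d' + s - 1)).toNat) = 0 := by
        apply Nat.le_zero.mp
        apply Finset.sup_le
        intro n hn
        have := (hsub n (Finsupp.mem_support_iff.mp hn)).2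
        omega
      have hB1 : (p₁.coeff.support.sup fun n => (d' - n).toNat) ≤ (d' - (m + 1)).toNat := by
        apply Finset.sup_le
        intro n hn
        have := (hsub n (Finsupp.mem_support_iff.mp hn)).1
        omega
      obtain ⟨a, r, hpr, hwr⟩ := ih p₁ (by omega)
      rw [hp₁] at hpr
      exact ⟨a + (AddMonoidAlgebra.single t c : LaurentPolynomial K), r, by linear_combination hpr, hwr⟩

/-- Generalized division with remainder for Laurent polynomials (Lemma 2 of the paper):
if `q` has support of length `s` (contained in `[d, d+s]`, with both endpoints attained)
then every Laurent polynomial `p` has a unique representation `p = q * a + r` with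
`r` supported in `[d', d'+s-1]` (i.e. `{d', ..., d'+s-1}`). -/
theorem laurent_division_with_remainder {K : Type*} [Field K]
    (q : LaurentPolynomial K) (d : ℤ) (s : ℕ)
    (hsupp : ∀ n : ℤ, q.coeff n ≠ 0 → d ≤ n ∧ n ≤ d + s)
    (hb0 : q.coeff d ≠ 0) (hbs : q.coeff (d + s) ≠ 0)
    (d' : ℤ) (p : LaurentPolynomial K) :
    ∃! ar : LaurentPolynomial K × LaurentPolynomial K,
      p = q * ar.1 + ar.2 ∧
      ∀ n : ℤ, ar.2.coeff n ≠ 0 → d' ≤ n ∧ n < d' + s := by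
  obtain ⟨a, r, hpr, hwr⟩ := ldwr_exists q d s hsupp hb0 hbs d'
    ((p.coeff.support.sup fun n => (n - (d' + s - 1)).toNat) +
      (p.coeff.support.sup fun n => (d' - n).toNat)) p le_rfl
  refine ⟨(a, r), ⟨hpr, hwr⟩, ?_⟩
  rintro ⟨a', r'⟩ ⟨h1, h2⟩
  have h1' : p = q * a' + r' := h1
  have h2' : ∀ n : ℤ, r'.coeff n ≠ 0 → d' ≤ n ∧ n < d' + s := h2
  have hw : q * (a' - a) = r - r' := by linear_combination hpr - h1'
  have hwin : ∀ n : ℤ, (r - r').coeff n ≠ 0 → d' ≤ n ∧ n < d' + s := by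
    intro n h
    have h' : r.coeff n ≠ 0 ∨ r'.coeff n ≠ 0 := by
      by_contra hc
      push_neg at hc
      rw [AddMonoidAlgebra.coeff_sub, Finsupp.sub_apply, hc.1, hc.2, sub_self] at h
      exact h rfl
    rcases h' with h' | h'
    · exact hwr n h'
    · exact h2' n h'
  by_cases hz : a' - a = 0
  · have ha : a' = a := sub_eq_zero.mp hz
    have hr : r' = r := by
      have : r - r' = 0 := by rw [← hw, hz, mul_zero]
      exact (sub_eq_zero.mp this).symm
    rw [ha, hr]
  · exfalso
    have hne : (a' - a).coeff.support.Nonempty := Finsupp.support_nonempty_iff.mpr (AddMonoidAlgebra.coeff_eq_zero.not.mpr hz)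
    set w := a' - a with hwdef
    set α := w.coeff.support.min' hne with hα
    set β := w.coeff.support.max' hne with hβ
    have hαmem : α ∈ w.coeff.support := w.coeff.support.min'_mem hne
    have hβmem : β ∈ w.coeff.support := w.coeff.support.max'_mem hne
    have hαβ : α ≤ β := Finset.min'_le _ _ hβmem
    have hwα : w.coeff α ≠ 0 := Finsupp.mem_support_iff.mp hαmem
    have hwβ : w.coeff β ≠ 0 := Finsupp.mem_support_iff.mp hβmem
    have hmin : (q * w).coeff (d + α) = q.coeff d * w.coeff α :=
      ldwr_coeff_mul_min q w (fun n h => (hsupp n h).1)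
        (fun n h => Finset.min'_le _ _ (Finsupp.mem_support_iff.mpr h))
    have hmax : (q * w).coeff ((d + s) + β) = q.coeff (d + s) * w.coeff β :=
      ldwr_coeff_mul_max q w (fun n h => (hsupp n h).2)
        (fun n h => Finset.le_max' _ _ (Finsupp.mem_support_iff.mpr h))
    rw [hw] at hmin hmax
    have hc1 := hwin (d + α) (by rw [hmin]; exact mul_ne_zero hb0 hwα)
    have hc2 := hwin ((d + s) + β) (by rw [hmax]; exact mul_ne_zero hbs hwβ)
    omega
end

section
/- Let Λ and Λ* be the graphs of two piecewise-linear convex decreasing functions on intervals [a₀, a_σ] and [b₀, b_σ] respectively, such that every edge of Λ* is parallel to some edge of Λ, with corresponding parallel edges projecting to the x-intervals [a_{i-1}, a_i] and [b_{i-1}, b_i] (possibly degenerate, b_{i-1} = b_i). Assume a₀ = b₀, a_σ ≤ b_σ, and Λ* ≠ Λ. Then there exists an index i with [a_{i-1}, a_i] strictly contained in [b_{i-1}, b_i]; in particular some edge of Λ* is parallel to and strictly longer than the corresponding edge of Λ. -/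
/-- Lemma 1 of the paper (combinatorial form). Let `a₀ < a₁ < … < a_σ` be the
`x`-coordinates of the vertices of the diagram `Λ` and `b₀ ≤ b₁ ≤ … ≤ b_σ` those of the
corresponding vertices of `Λ*` (the `i`-th edge of `Λ*`, projecting to `[b_{i-1}, b_i]`,
being parallel to the `i`-th edge of `Λ`, projecting to `[a_{i-1}, a_i]`). If `a₀ = b₀`,
`a_σ ≤ b_σ` and `Λ* ≠ Λ` (some vertex differs), then some edge interval `[a_{i-1}, a_i]`
is strictly contained in `[b_{i-1}, b_i]`: in particular the corresponding (parallel) edge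
of `Λ*` is strictly longer than that of `Λ`. -/
theorem exists_strictly_longer_edge (σ : ℕ) (hσ : 1 ≤ σ) (a b : ℕ → ℝ)
    (ha : ∀ i < σ, a i < a (i + 1))
    (hb : ∀ i < σ, b i ≤ b (i + 1))
    (h0 : a 0 = b 0) (hend : a σ ≤ b σ)
    (hne : ∃ i ≤ σ, a i ≠ b i) :
    ∃ i, 1 ≤ i ∧ i ≤ σ ∧
      Set.Icc (a (i - 1)) (a i) ⊆ Set.Icc (b (i - 1)) (b i) ∧
      a i - a (i - 1) < b i - b (i - 1) := by
  classical
  by_cases hc : ∃ j, j ≤ σ ∧ b j < a j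
  · -- some vertex of Λ* is to the left of that of Λ; find the first return crossing
    obtain ⟨j, hjσ, hj⟩ := hc
    have hjσ' : j < σ := lt_of_le_of_ne hjσ (by rintro rfl; exact absurd hend (not_le.2 hj))
    have hP : ∃ i, j < i ∧ i ≤ σ ∧ a i ≤ b i := ⟨σ, hjσ', le_refl σ, hend⟩
    set i := Nat.find hP with hidef
    obtain ⟨hji, hiσ, hab⟩ := Nat.find_spec hP
    have h1i : 1 ≤ i := Nat.one_le_iff_ne_zero.2 (by omega)
    have hlt : b (i - 1) < a (i - 1) := by
      have hjle : j ≤ i - 1 := by omega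
      rcases eq_or_lt_of_le hjle with h | h
      · rwa [← h]
      · have := Nat.find_min hP (m := i - 1) (by omega)
        push_neg at this
        exact this h (by omega)
    exact ⟨i, h1i, hiσ, Set.Icc_subset_Icc hlt.le hab, by linarith⟩
  · -- Λ* is everywhere weakly to the right; find the first strict gap
    push_neg at hc
    obtain ⟨k, hkσ, hk⟩ := hne
    have hQ : ∃ i, i ≤ σ ∧ a i < b i := ⟨k, hkσ, lt_of_le_of_ne (hc k hkσ) hk⟩
    set i := Nat.find hQ with hidef
    obtain ⟨hiσ, hab⟩ := Nat.find_spec hQ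
    have hab' : a i < b i := hab
    have h1i : 1 ≤ i := by
      rcases Nat.eq_zero_or_pos i with h | h
      · rw [h] at hab'; exact absurd h0 (ne_of_lt hab')
      · exact h
    have heq : b (i - 1) ≤ a (i - 1) := by
      have := Nat.find_min hQ (m := i - 1) (by omega)
      push_neg at this
      exact this (by omega)
    exact ⟨i, h1i, hiσ, Set.Icc_subset_Icc heq hab'.le, by linarith [hab']⟩
end
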